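/- Let k be a field. Consider the map φ : SL₂(k) → k³ sending the matrix with rows (a, b) and (c, d) to (ab, ad, cd). Then: (i) the image of φ is exactly the quadric surface {(x, y, z) ∈ k³ : xz = y² − y}; and (ii) for g, g′ ∈ SL₂(k), φ(g) = φ(g′) if and only if g′ = g·t for some diagonal matrix t = diag(λ, λ⁻¹) with λ ∈ k, λ ≠ 0. (Thus φ identifies SL₂(k)/T with the Danielewski surface xz = y² − y, where T is the diagonal torus.) -/
import Mathlib

/-- The map `φ : SL₂(k) → k³`, `(a b; c d) ↦ (ab, ad, cd)`. -/
def sl2Phi (k : Type*) [Field k] (g : Matrix.SpecialLinearGroup (Fin 2) k) : k × k × k :=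
  ((g : Matrix (Fin 2) (Fin 2) k) 0 0 * (g : Matrix (Fin 2) (Fin 2) k) 0 1,
   (g : Matrix (Fin 2) (Fin 2) k) 0 0 * (g : Matrix (Fin 2) (Fin 2) k) 1 1,
   (g : Matrix (Fin 2) (Fin 2) k) 1 0 * (g : Matrix (Fin 2) (Fin 2) k) 1 1)

/-- (i) The image of `φ : SL₂(k) → k³`, `(a b; c d) ↦ (ab, ad, cd)`, is exactly the
Danielewski quadric `{(x,y,z) : xz = y² - y}`; (ii) `φ(g) = φ(g')` iff `g' = g·t` for a
diagonal matrix `t = diag(λ, λ⁻¹)` with `λ ≠ 0`. Thus `φ` identifies `SL₂(k)/T` with the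
surface `xz = y² - y`. -/
theorem stmt_14 (k : Type*) [Field k] :
    (∀ v : k × k × k,
      (∃ g : Matrix.SpecialLinearGroup (Fin 2) k, sl2Phi k g = v) ↔
        v.1 * v.2.2 = v.2.1 ^ 2 - v.2.1) ∧
    (∀ g g' : Matrix.SpecialLinearGroup (Fin 2) k,
      sl2Phi k g = sl2Phi k g' ↔
        ∃ u : kˣ, (g' : Matrix (Fin 2) (Fin 2) k) =
          (g : Matrix (Fin 2) (Fin 2) k) * !![(u : k), 0; 0, ((u⁻¹ : kˣ) : k)]) := by
  have hdet : ∀ g : Matrix.SpecialLinearGroup (Fin 2) k,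
      (g : Matrix (Fin 2) (Fin 2) k) 0 0 * (g : Matrix (Fin 2) (Fin 2) k) 1 1 -
        (g : Matrix (Fin 2) (Fin 2) k) 0 1 * (g : Matrix (Fin 2) (Fin 2) k) 1 0 = 1 := by
    intro g
    have h := g.prop
    rwa [Matrix.det_fin_two] at h
  constructor
  · rintro ⟨x, y, z⟩
    constructor
    · rintro ⟨g, hg⟩
      simp only [sl2Phi, Prod.mk.injEq] at hg
      obtain ⟨hx, hy, hz⟩ := hg
      have d1 := hdet g
      subst hx hy hz
      simp only []
      linear_combination (-((g : Matrix (Fin 2) (Fin 2) k) 0 0 *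
        (g : Matrix (Fin 2) (Fin 2) k) 1 1)) * d1
    · intro h
      simp only [] at h
      by_cases hy : y = 0
      · subst hy
        have hxz : x * z = 0 := by linear_combination h
        refine ⟨⟨!![-x, -1; 1, z], ?_⟩, ?_⟩
        · rw [Matrix.det_fin_two_of]; linear_combination -hxz
        · simp [sl2Phi, hxz]
      · refine ⟨⟨!![1, x; z/y, y], ?_⟩, ?_⟩
        · rw [Matrix.det_fin_two_of]
          field_simp
          linear_combination -h
        · simp only [sl2Phi, Prod.mk.injEq]
          refine ⟨by simp, by simp, ?_⟩
          simp
          field_simp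
  · intro g g'
    constructor
    · intro h
      simp only [sl2Phi, Prod.mk.injEq] at h
      obtain ⟨h1, h2, h3⟩ := h
      have d1 := hdet g
      have d2 := hdet g'
      set a := (g : Matrix (Fin 2) (Fin 2) k) 0 0 with ha0
      set b := (g : Matrix (Fin 2) (Fin 2) k) 0 1 with hb0
      set c := (g : Matrix (Fin 2) (Fin 2) k) 1 0 with hc0
      set d := (g : Matrix (Fin 2) (Fin 2) k) 1 1 with hd0
      set a' := (g' : Matrix (Fin 2) (Fin 2) k) 0 0 with ha0'
      set b' := (g' : Matrix (Fin 2) (Fin 2) k) 0 1 with hb0'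
      set c' := (g' : Matrix (Fin 2) (Fin 2) k) 1 0 with hc0'
      set d' := (g' : Matrix (Fin 2) (Fin 2) k) 1 1 with hd0'
      have hbc : b * c = b' * c' := by linear_combination h2 - d1 + d2
      by_cases hA : a = 0
      · -- a = 0 : b, c ≠ 0
        have hb : b ≠ 0 := by
          intro hb; rw [hA, hb] at d1; simp at d1
        have hc : c ≠ 0 := by
          intro hc; rw [hA, hc] at d1; simp at d1
        have hA' : a' = 0 := by
          by_contra hA'
          have hd' : d' = 0 := by
            have : a' * d' = 0 := by rw [← h2, hA]; ring
            rcases mul_eq_zero.mp this with h | h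
            · exact absurd h hA'
            · exact h
          have hb' : b' = 0 := by
            have : a' * b' = 0 := by rw [← h1, hA]; ring
            rcases mul_eq_zero.mp this with h | h
            · exact absurd h hA'
            · exact h
          rw [hd', hb'] at d2; simp at d2
        have hc' : c' ≠ 0 := by
          intro hc'; rw [hA', hc'] at d2; simp at d2
        refine ⟨Units.mk0 (c' / c) (div_ne_zero hc' hc), ?_⟩
        ext i j
        fin_cases i <;> fin_cases j <;>
          simp only [Matrix.mul_apply, Fin.sum_univ_two, Units.val_mk0,
            Units.val_inv_eq_inv_val, Matrix.cons_val', Matrix.cons_val_zero,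
            Matrix.cons_val_one, Matrix.head_cons, Matrix.head_fin_const,
            Matrix.empty_val', Matrix.cons_val_fin_one, Fin.mk_zero, Fin.mk_one,
            Matrix.of_apply, mul_zero, zero_mul, add_zero, zero_add]
        · -- a' = a * (c'/c)
          rw [← ha0', ← ha0, hA, hA']; ring
        · -- b' = b * (c'/c)⁻¹
          rw [← hb0', ← hb0]
          field_simp
          linear_combination -hbc
        · -- c' = c * (c'/c)
          rw [← hc0', ← hc0]; field_simp
        · -- d' = d * (c'/c)⁻¹
          rw [← hd0', ← hd0]
          field_simp
          linear_combination -h3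
      · -- a ≠ 0
        have hA' : a' ≠ 0 := by
          intro hA'
          have hd : d = 0 := by
            have : a * d = 0 := by rw [h2, hA']; ring
            rcases mul_eq_zero.mp this with h | h
            · exact absurd h hA
            · exact h
          have hb : b = 0 := by
            have : a * b = 0 := by rw [h1, hA']; ring
            rcases mul_eq_zero.mp this with h | h
            · exact absurd h hA
            · exact h
          rw [hd, hb] at d1; simp at d1
        have key : c' * a = c * a' := by
          by_cases hd : d = 0
          · have hb : b ≠ 0 := by
              intro hb; rw [hd, hb] at d1; simp at d1
            have := mul_left_cancel₀ hb
              (show b * (c' * a) = b * (c * a') by linear_combination c' * h1 - a' * hbc)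
            exact this
          · exact mul_left_cancel₀ hd
              (show d * (c' * a) = d * (c * a') by linear_combination c' * h2 - a' * h3)
        refine ⟨Units.mk0 (a' / a) (div_ne_zero hA' hA), ?_⟩
        ext i j
        fin_cases i <;> fin_cases j <;>
          simp only [Matrix.mul_apply, Fin.sum_univ_two, Units.val_mk0,
            Units.val_inv_eq_inv_val, Matrix.cons_val', Matrix.cons_val_zero,
            Matrix.cons_val_one, Matrix.head_cons, Matrix.head_fin_const,
            Matrix.empty_val', Matrix.cons_val_fin_one, Fin.mk_zero, Fin.mk_one,
            Matrix.of_apply, mul_zero, zero_mul, add_zero, zero_add]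
        · rw [← ha0', ← ha0]; field_simp
        · rw [← hb0', ← hb0]; field_simp; linear_combination -h1
        · rw [← hc0', ← hc0]; field_simp; linear_combination key
        · rw [← hd0', ← hd0]; field_simp; linear_combination -h2
    · rintro ⟨u, hu⟩
      have huu : (u : k) * ((u⁻¹ : kˣ) : k) = 1 := by exact_mod_cast u.mul_inv
      simp only [sl2Phi, Prod.mk.injEq, hu, Matrix.mul_apply, Fin.sum_univ_two,
        Matrix.cons_val', Matrix.cons_val_zero, Matrix.cons_val_one, Matrix.head_cons,
        Matrix.empty_val', Matrix.cons_val_fin_one, Matrix.of_apply, mul_zero, zero_mul,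
        add_zero, zero_add, Matrix.vecHead, Matrix.vecTail]
      refine ⟨?_, ?_, ?_⟩
      · linear_combination
          (-((g : Matrix (Fin 2) (Fin 2) k) 0 0 * (g : Matrix (Fin 2) (Fin 2) k) 0 1)) * huu
      · linear_combination
          (-((g : Matrix (Fin 2) (Fin 2) k) 0 0 * (g : Matrix (Fin 2) (Fin 2) k) 1 1)) * huu
      · linear_combination
          (-((g : Matrix (Fin 2) (Fin 2) k) 1 0 * (g : Matrix (Fin 2) (Fin 2) k) 1 1)) * huu
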